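/- arXiv:1110.0073 — 2 statements merged into one kernel-verified Lean document; each statement's English description precedes it below -/
import Mathlib

section
/- Let p_0 > p_1 > ... > p_{k-1} be real numbers in (0,1) and let q ∈ (0,1). If D_KL(p_{β-1}‖q) > D_KL(p_β‖q) and D_KL(p_{β+1}‖q) > D_KL(p_β‖q) for some index β with 0 < β < k-1, then D_KL(p_j‖q) > D_KL(p_β‖q) for all j ≠ β; i.e., β is the unique nearest neighbor of q among p_0,...,p_{k-1} in KL divergence. -/
/-- Binary KL divergence `D_KL(Ber(a)‖Ber(b))`. -/
noncomputable def klBer (a b : ℝ) : ℝ :=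
  a * Real.log (a / b) + (1 - a) * Real.log ((1 - a) / (1 - b))

open Real Set

lemma convexOn_affine (c d : ℝ) : ConvexOn ℝ (Set.Ioo (0:ℝ) 1) (fun a => c * a + d) := by
  refine ⟨convex_Ioo 0 1, ?_⟩
  intro x _ y _ t u ht hu htu
  simp only [smul_eq_mul]
  have : u = 1 - t := by linarith
  subst this
  apply le_of_eq
  ring

lemma strictConvexOn_klBer (q : ℝ) (hq : q ∈ Set.Ioo (0:ℝ) 1) :
    StrictConvexOn ℝ (Set.Ioo (0:ℝ) 1) (fun a => klBer a q) := by
  have h1 : StrictConvexOn ℝ (Set.Ioo (0:ℝ) 1) (fun a : ℝ => a * Real.log a) :=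
    Real.strictConvexOn_mul_log.subset (fun x hx => le_of_lt hx.1) (convex_Ioo 0 1)
  have h2 : ConvexOn ℝ (Set.Ioo (0:ℝ) 1) (fun a : ℝ => (1 - a) * Real.log (1 - a)) := by
    have := Real.convexOn_mul_log.comp_affineMap
      (AffineMap.const ℝ ℝ (1:ℝ) - AffineMap.id ℝ ℝ)
    refine this.subset (fun x hx => ?_) (convex_Ioo 0 1)
    simp only [Set.mem_preimage, AffineMap.coe_sub, AffineMap.coe_const, AffineMap.coe_id,
      Pi.sub_apply, Function.const_apply, id_eq, Set.mem_Ici]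
    linarith [hx.2]
  have h3 : ConvexOn ℝ (Set.Ioo (0:ℝ) 1)
      (fun a : ℝ => (Real.log (1 - q) - Real.log q) * a + (- Real.log (1 - q))) :=
    convexOn_affine _ _
  have hg : StrictConvexOn ℝ (Set.Ioo (0:ℝ) 1)
      (fun a : ℝ => (a * Real.log a + (1 - a) * Real.log (1 - a)) +
        ((Real.log (1 - q) - Real.log q) * a + (- Real.log (1 - q)))) :=
    (h1.add_convexOn h2).add_convexOn h3
  refine hg.congr fun a ha => ?_
  have ha0 : (0:ℝ) < a := ha.1
  have ha1 : (0:ℝ) < 1 - a := by linarith [ha.2]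
  have hq0 : (0:ℝ) < q := hq.1
  have hq1 : (0:ℝ) < 1 - q := by linarith [hq.2]
  simp only [klBer]
  rw [Real.log_div (ne_of_gt ha0) (ne_of_gt hq0),
    Real.log_div (ne_of_gt ha1) (ne_of_gt hq1)]
  ring

/-- Three-point lemma: if `f` is strictly convex, `x < y < z` all in the set,
and `f y > f x`, then `f z > f x`. -/
lemma three_point {f : ℝ → ℝ} {s : Set ℝ} (hf : StrictConvexOn ℝ s f)
    {x y z : ℝ} (hx : x ∈ s) (hz : z ∈ s) (hxy : x < y) (hyz : y < z)
    (hfy : f y > f x) : f z > f x := by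
  by_contra h
  push_neg at h
  set t : ℝ := (z - y) / (z - x) with ht
  have hzx : (0:ℝ) < z - x := by linarith
  have ht0 : 0 < t := div_pos (by linarith) hzx
  have ht1 : t < 1 := by
    rw [div_lt_one hzx]; linarith
  have hne : z - x ≠ 0 := ne_of_gt hzx
  have hcomb : t • x + (1 - t) • z = y := by
    simp only [smul_eq_mul, ht]
    field_simp
    ring
  have := hf.2 hx hz (by intro he; linarith) ht0 (by linarith)
    (by linarith : t + (1 - t) = 1)
  rw [hcomb] at this
  have : f y < t * f x + (1 - t) * f x := by
    simp only [smul_eq_mul] at this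
    nlinarith [this, h, ht0, ht1]
  nlinarith [this]


/-- Reversed three-point lemma. -/
lemma three_point_rev {f : ℝ → ℝ} {s : Set ℝ} (hf : StrictConvexOn ℝ s f)
    {x y z : ℝ} (hx : x ∈ s) (hz : z ∈ s) (hxy : y < x) (hyz : z < y)
    (hfy : f y > f x) : f z > f x := by
  by_contra h
  push_neg at h
  set t : ℝ := (y - z) / (x - z) with ht
  have hzx : (0:ℝ) < x - z := by linarith
  have ht0 : 0 < t := div_pos (by linarith) hzx
  have ht1 : t < 1 := by rw [div_lt_one hzx]; linarith
  have hne : x - z ≠ 0 := ne_of_gt hzx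
  have hcomb : t • x + (1 - t) • z = y := by
    simp only [smul_eq_mul, ht]
    field_simp
    ring
  have hlt := hf.2 hx hz (by intro he; linarith) ht0 (by linarith)
    (by linarith : t + (1 - t) = 1)
  rw [hcomb] at hlt
  simp only [smul_eq_mul] at hlt
  nlinarith [hlt, h, ht0, ht1]

/-- Lemma 2 (Equivalence): for a strictly decreasing family `p_0 > ... > p_{k-1}`
in `(0,1)`, if `q` is KL-closer to `p_β` than to both adjacent boundaries, then
`p_β` is the unique nearest neighbor of `q` among all the `p_j`. -/
theorem kl_nearest_neighbor (k : ℕ) (p : ℕ → ℝ) (q : ℝ)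
    (hdec : ∀ i j, i < j → j < k → p j < p i)
    (hmem : ∀ j, j < k → p j ∈ Set.Ioo (0:ℝ) 1)
    (hq : q ∈ Set.Ioo (0:ℝ) 1)
    (β : ℕ) (hβ0 : 0 < β) (hβk : β < k - 1)
    (hleft : klBer (p (β - 1)) q > klBer (p β) q)
    (hright : klBer (p (β + 1)) q > klBer (p β) q) :
    ∀ j, j < k → j ≠ β → klBer (p j) q > klBer (p β) q := by
  have hk : β + 1 < k := by omega
  have hβk' : β < k := by omega
  have hf := strictConvexOn_klBer q hq
  intro j hj hne
  rcases lt_or_gt_of_ne hne with hlt | hgt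
  · -- j < β
    rcases eq_or_lt_of_le (Nat.le_of_lt_succ (by omega : j < (β - 1) + 1)) with he | hl
    · rw [he]; exact hleft
    · -- j < β - 1, so p j > p (β-1) > p β
      have h1 : p (β - 1) < p j := hdec j (β - 1) hl (by omega)
      have h2 : p β < p (β - 1) := hdec (β - 1) β (by omega) hβk'
      exact three_point hf (hmem β hβk') (hmem j hj) h2 h1 hleft
  · -- j > β
    rcases eq_or_lt_of_le (by omega : β + 1 ≤ j) with he | hl
    · rw [← he]; exact hright
    · have h1 : p j < p (β + 1) := hdec (β + 1) j hl hj
      have h2 : p (β + 1) < p β := hdec β (β + 1) (by omega) hk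
      -- here x = p β > y = p (β+1) > z = p j ; use three_point on negated order
      exact three_point_rev hf (hmem β hβk') (hmem j hj) h2 h1 hright
end

section
/- Let Δ ∈ (0,1), p ∈ (0,1) with p+Δ < 1, and let f(p) = ( p^p(1-p)^{1-p} / ((p+Δ)^{p+Δ}(1-p-Δ)^{1-p-Δ}) )^{1/Δ}. Then p < 1/(f(p)+1) < p + Δ; i.e., the KL-equidistant threshold between Bernoulli parameters p and p+Δ lies strictly between them. -/
/-- The function `f` from the HCS quantizer. -/
noncomputable def hcsF (Δ p : ℝ) : ℝ :=
  ((p ^ p * (1 - p) ^ (1 - p)) /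
    ((p + Δ) ^ (p + Δ) * (1 - p - Δ) ^ (1 - p - Δ))) ^ (1 / Δ)

/-!
Up to sign, `log (x ^ x * (1 - x) ^ (1 - x))` is the binary entropy `H x`, so `log f(p)` is the
slope of `H` over `[p, p + Δ]`. By the mean value theorem this slope is
`H' c = log ((1 - c) / c)` for some `c ∈ (p, p + Δ)`; hence `f(p) = (1 - c) / c` and
`1 / (f(p) + 1) = c`.
-/

open Real

lemma Real.rpow_self_eq_exp_neg_negMulLog {x : ℝ} (hx : 0 ≤ x) : x ^ x = exp (-negMulLog x) := by
  rcases hx.eq_or_lt with rfl | hx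
  · simp
  · rw [rpow_def_of_pos hx, negMulLog, neg_mul, neg_neg, mul_comm]

lemma Real.rpow_self_mul_one_sub_rpow_eq_exp_neg_binEntropy {x : ℝ} (hx : x ∈ Set.Icc 0 1) :
    x ^ x * (1 - x) ^ (1 - x) = exp (-binEntropy x) := by
  rw [rpow_self_eq_exp_neg_negMulLog hx.1, rpow_self_eq_exp_neg_negMulLog (sub_nonneg.2 hx.2),
    ← exp_add, binEntropy_eq_negMulLog_add_negMulLog_one_sub, neg_add]

lemma hcsF_eq_exp_div {Δ p : ℝ} (hp : p ∈ Set.Icc 0 1) (hq : p + Δ ∈ Set.Icc 0 1) :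
    hcsF Δ p = exp ((binEntropy (p + Δ) - binEntropy p) / Δ) := by
  rw [hcsF, rpow_self_mul_one_sub_rpow_eq_exp_neg_binEntropy hp, sub_sub,
    rpow_self_mul_one_sub_rpow_eq_exp_neg_binEntropy hq, ← exp_sub, ← exp_mul]
  ring_nf

lemma Real.one_div_exp_log_one_sub_sub_log_add_one {c : ℝ} (hc : c ∈ Set.Ioo 0 1) :
    1 / (exp (log (1 - c) - log c) + 1) = c := by
  have h1c : 0 < 1 - c := sub_pos.2 hc.2
  rw [← log_div h1c.ne' hc.1.ne', exp_log (div_pos h1c hc.1), div_add_one hc.1.ne',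
    sub_add_cancel, one_div_one_div]

/-- The KL-equidistant threshold `1/(f(p)+1)` lies strictly between `p` and `p+Δ`. -/
theorem hcs_threshold_between (p Δ : ℝ) (hΔ : Δ ∈ Set.Ioo (0:ℝ) 1)
    (hp : p ∈ Set.Ioo (0:ℝ) 1) (hpΔ : p + Δ < 1) :
    p < 1 / (hcsF Δ p + 1) ∧ 1 / (hcsF Δ p + 1) < p + Δ := by
  obtain ⟨c, hc, hslope⟩ := exists_hasDerivAt_eq_slope binEntropy (fun x ↦ log (1 - x) - log x)
    (lt_add_of_pos_right p hΔ.1) binEntropy_continuous.continuousOn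
    fun x hx ↦ hasDerivAt_binEntropy (by linarith [hx.1, hp.1]) (by linarith [hx.2])
  have hc01 : c ∈ Set.Ioo 0 1 := ⟨hp.1.trans hc.1, hc.2.trans hpΔ⟩
  rw [add_sub_cancel_left] at hslope
  have hthreshold : 1 / (hcsF Δ p + 1) = c := by
    rw [hcsF_eq_exp_div (Set.Ioo_subset_Icc_self hp) ⟨by linarith [hp.1, hΔ.1], hpΔ.le⟩,
      ← hslope, one_div_exp_log_one_sub_sub_log_add_one hc01]
  exact hthreshold ▸ hc
end
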